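/- For every k ≥ 3 and n ≥ 1, the tensor rank of the n-th Kronecker power of the generalised W-state tensor satisfies rank(W_k^{⊗n}) ≥ rank(W₃^{⊗n}) + (k−3)(2^n − 1). -/
import Mathlib


/-- The rank of a `k`-tensor in coordinates: the least `r` such that the tensor is a
sum of `r` simple tensors. -/
noncomputable def krank {k : ℕ} {I : Fin k → Type*} [∀ j, Fintype (I j)]
    (t : (∀ j, I j) → ℂ) : ℕ :=
  sInf {r | ∃ v : Fin r → ∀ j, I j → ℂ, ∀ f, t f = ∑ m, ∏ j, v m j (f j)}

/-- The generalised W-state tensor `W_k ∈ (ℂ²)^{⊗k}` in coordinates. -/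
noncomputable def Wtensor (k : ℕ) : (Fin k → Fin 2) → ℂ := fun f =>
  ∑ i : Fin k, ∏ j : Fin k, if f j = (if j = i then 1 else 0) then 1 else 0

/-- The `n`-th Kronecker power `W_k^{⊗n} ∈ (ℂ^{2^n})^{⊗k}` of `W_k`, grouping the `n`
copies of each of the `k` factors together. -/
noncomputable def WtensorPow (k n : ℕ) : (Fin k → (Fin n → Fin 2)) → ℂ := fun f =>
  ∏ m : Fin n, Wtensor k (fun j => f j m)






lemma fin2cases : ∀ a : Fin 2, a = 0 ∨ a = 1 := by decide

lemma Wtensor_zero (K : ℕ) : Wtensor (K+1) (fun _ => 0) = 0 := by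
  unfold Wtensor
  refine Finset.sum_eq_zero fun i _ => ?_
  refine Finset.prod_eq_zero (Finset.mem_univ i) ?_
  simp

lemma Wtensor_delta (K : ℕ) :
    Wtensor (K+1) (fun j => if j = 0 then 1 else 0) = 1 := by
  unfold Wtensor
  rw [Fin.sum_univ_succ]
  have h0 : (∏ j : Fin (K+1), if (if j = 0 then (1:Fin 2) else 0) = (if j = 0 then 1 else 0) then (1:ℂ) else 0) = 1 :=
    Finset.prod_eq_one fun j _ => by simp
  rw [h0]
  have h1 : ∀ i : Fin K, (∏ j : Fin (K+1),
      if (if j = 0 then (1:Fin 2) else 0) = (if j = i.succ then 1 else 0) then (1:ℂ) else 0) = 0 := by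
    intro i
    refine Finset.prod_eq_zero (Finset.mem_univ 0) ?_
    simp [(Fin.succ_ne_zero i).symm]
  rw [Finset.sum_congr rfl fun i _ => h1 i]
  simp

lemma Wtensor_snoc (K : ℕ) (col : Fin K → Fin 2) (b : Fin 2) :
    Wtensor (K+1) (Fin.snoc col b)
      = if b = 0 then Wtensor K col else (if ∀ j, col j = 0 then 1 else 0) := by
  unfold Wtensor
  rw [Fin.sum_univ_castSucc]
  have hterm : ∀ i : Fin (K+1), (∏ j : Fin (K+1),
      if (Fin.snoc col b : Fin (K+1) → Fin 2) j = (if j = i then 1 else 0) then (1:ℂ) else 0)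
      = (∏ j : Fin K, if col j = (if j.castSucc = i then 1 else 0) then (1:ℂ) else 0)
        * (if b = (if Fin.last K = i then 1 else 0) then (1:ℂ) else 0) := by
    intro i
    rw [Fin.prod_univ_castSucc]
    simp only [Fin.snoc_castSucc, Fin.snoc_last]
  rcases fin2cases b with hb | hb
  · subst hb
    rw [if_pos rfl]
    have hlast : (∏ j : Fin (K+1),
        if (Fin.snoc col 0 : Fin (K+1) → Fin 2) j = (if j = Fin.last K then 1 else 0) then (1:ℂ) else 0) = 0 := by
      rw [hterm]
      simp
    rw [hlast, add_zero]
    refine Finset.sum_congr rfl fun i _ => ?_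
    rw [hterm]
    have : (if (0:Fin 2) = (if Fin.last K = i.castSucc then 1 else 0) then (1:ℂ) else 0) = 1 := by
      rw [if_neg (by simp [Fin.ext_iff]; omega : (Fin.last K) ≠ i.castSucc)]
      simp
    rw [this, mul_one]
    refine Finset.prod_congr rfl fun j _ => ?_
    simp [Fin.castSucc_inj]
  · have hb0 : b ≠ 0 := by rw [hb]; decide
    rw [if_neg hb0]
    have hcs : ∀ i : Fin K, (∏ j : Fin (K+1),
        if (Fin.snoc col b : Fin (K+1) → Fin 2) j = (if j = i.castSucc then 1 else 0) then (1:ℂ) else 0) = 0 := by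
      intro i
      rw [hterm]
      have : (if b = (if Fin.last K = i.castSucc then 1 else 0) then (1:ℂ) else 0) = 0 := by
        rw [if_neg (by simp [Fin.ext_iff]; omega : (Fin.last K) ≠ i.castSucc), if_neg hb0]
      rw [this, mul_zero]
    rw [Finset.sum_congr rfl fun i _ => hcs i]
    rw [Finset.sum_const, smul_zero, zero_add, hterm]
    have : (if b = (if Fin.last K = Fin.last K then 1 else 0) then (1:ℂ) else 0) = 1 := by
      rw [if_pos rfl, hb]; simp
    rw [this, mul_one]
    have : ∀ j : Fin K, (if col j = (if j.castSucc = Fin.last K then 1 else 0) then (1:ℂ) else 0)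
        = if col j = 0 then 1 else 0 := by
      intro j
      rw [if_neg (by simp [Fin.ext_iff]; omega : (j.castSucc : Fin (K+1)) ≠ Fin.last K)]
    rw [Finset.prod_congr rfl fun j _ => this j, Finset.prod_boole]
    simp

lemma Wtensor_cons (K : ℕ) (b : Fin 2) (col : Fin K → Fin 2) :
    Wtensor (K+1) (Fin.cons b col)
      = if b = 1 then (if ∀ j, col j = 0 then 1 else 0) else Wtensor K col := by
  unfold Wtensor
  rw [Fin.sum_univ_succ]
  have hterm : ∀ i : Fin (K+1), (∏ j : Fin (K+1),
      if (Fin.cons b col : Fin (K+1) → Fin 2) j = (if j = i then 1 else 0) then (1:ℂ) else 0)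
      = (if b = (if (0 : Fin (K+1)) = i then 1 else 0) then (1:ℂ) else 0)
        * (∏ j : Fin K, if col j = (if j.succ = i then 1 else 0) then (1:ℂ) else 0) := by
    intro i
    rw [Fin.prod_univ_succ]
    simp only [Fin.cons_zero, Fin.cons_succ]
  rcases fin2cases b with hb | hb
  · have hb1 : b ≠ 1 := by rw [hb]; decide
    rw [if_neg hb1]
    have h0 : (∏ j : Fin (K+1),
        if (Fin.cons b col : Fin (K+1) → Fin 2) j = (if j = 0 then 1 else 0) then (1:ℂ) else 0) = 0 := by
      rw [hterm]
      rw [if_pos rfl, if_neg (by rw [hb]; decide : b ≠ (1:Fin 2)), zero_mul]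
    rw [h0, zero_add]
    refine Finset.sum_congr rfl fun i _ => ?_
    rw [hterm]
    have : (if b = (if (0:Fin (K+1)) = i.succ then 1 else 0) then (1:ℂ) else 0) = 1 := by
      rw [if_neg (Fin.succ_ne_zero i).symm, if_pos hb]
    rw [this, one_mul]
    refine Finset.prod_congr rfl fun j _ => ?_
    simp [Fin.succ_inj]
  · rw [if_pos hb]
    have h0 : (∏ j : Fin (K+1),
        if (Fin.cons b col : Fin (K+1) → Fin 2) j = (if j = 0 then 1 else 0) then (1:ℂ) else 0)
        = if ∀ j, col j = 0 then 1 else 0 := by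
      rw [hterm, if_pos rfl, if_pos hb, one_mul]
      have : ∀ j : Fin K, (if col j = (if j.succ = (0:Fin (K+1)) then 1 else 0) then (1:ℂ) else 0)
          = if col j = 0 then 1 else 0 := by
        intro j
        rw [if_neg (Fin.succ_ne_zero j)]
      rw [Finset.prod_congr rfl fun j _ => this j, Finset.prod_boole]
      simp
    rw [h0]
    have h1 : ∀ i : Fin K, (∏ j : Fin (K+1),
        if (Fin.cons b col : Fin (K+1) → Fin 2) j = (if j = i.succ then 1 else 0) then (1:ℂ) else 0) = 0 := by
      intro i
      rw [hterm]
      rw [if_neg (Fin.succ_ne_zero i).symm, if_neg (by rw [hb]; decide : b ≠ (0:Fin 2)), zero_mul]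
    rw [Finset.sum_congr rfl fun i _ => h1 i]
    simp


lemma krank_le {k : ℕ} {I : Fin k → Type*} [∀ j, Fintype (I j)]
    (t : (∀ j, I j) → ℂ) {r : ℕ} (v : Fin r → ∀ j, I j → ℂ)
    (h : ∀ f, t f = ∑ m, ∏ j, v m j (f j)) : krank t ≤ r :=
  Nat.sInf_le ⟨v, h⟩

lemma exists_decomp {K : ℕ} {α : Type*} [Fintype α] [DecidableEq α]
    (t : (Fin (K+1) → α) → ℂ) :
    ∃ (r : ℕ) (v : Fin r → Fin (K+1) → α → ℂ), ∀ f, t f = ∑ m, ∏ j, v m j (f j) := by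
  classical
  obtain ⟨e⟩ : Nonempty (Fin (Fintype.card (Fin (K+1) → α)) ≃ (Fin (K+1) → α)) :=
    ⟨(Fintype.equivFin _).symm⟩
  refine ⟨_, fun m j x => if x = e m j then (if j = 0 then t (e m) else 1) else 0, ?_⟩
  intro f
  have key : ∀ m,
      (∏ j, if f j = e m j then (if j = (0:Fin (K+1)) then t (e m) else 1) else 0)
        = if e m = f then t f else 0 := by
    intro m
    by_cases hm : e m = f
    · subst hm
      simp [Fin.prod_univ_succ, Finset.prod_ite_eq]
    · have : ∃ j, f j ≠ e m j := by
        by_contra hc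
        push_neg at hc
        exact hm (funext fun j => (hc j).symm)
      obtain ⟨j, hj⟩ := this
      rw [if_neg hm]
      exact Finset.prod_eq_zero (Finset.mem_univ j) (by simp [hj])
  rw [Finset.sum_congr rfl (fun m _ => key m),
    Equiv.sum_comp e (fun p => if p = f then t f else 0)]
  simp

lemma krank_spec {K : ℕ} {α : Type*} [Fintype α] [DecidableEq α]
    (t : (Fin (K+1) → α) → ℂ) :
    ∃ v : Fin (krank t) → Fin (K+1) → α → ℂ, ∀ f, t f = ∑ m, ∏ j, v m j (f j) := by
  have hne : {r | ∃ v : Fin r → Fin (K+1) → α → ℂ, ∀ f, t f = ∑ m, ∏ j, v m j (f j)}.Nonempty := by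
    obtain ⟨r, v, hv⟩ := exists_decomp t
    exact ⟨r, v, hv⟩
  exact Nat.sInf_mem hne


section L

variable {K' n : ℕ}

/-- pointwise or on bit strings -/
def orG (x g : Fin n → Fin 2) : Fin n → Fin 2 := fun m => max (x m) (g m)

/-- The Q tensors -/
noncomputable def Qt (K' n : ℕ) (h : Fin n → Fin 2) : (Fin K' → (Fin n → Fin 2)) → ℂ :=
  fun F => ∏ m, if h m = 1 then (if ∀ j, F j m = 0 then 1 else 0)
    else Wtensor K' (fun j => F j m)

/-- The L tensors -/
noncomputable def Lt (K' n : ℕ) (c : (Fin n → Fin 2) → ℂ) (x : Fin n → Fin 2) :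
    (Fin K' → (Fin n → Fin 2)) → ℂ :=
  fun F => ∑ g : Fin n → Fin 2,
    c g * ((if ∀ m, x m = 0 ∨ g m = 0 then 1 else 0) * Qt K' n (orG x g) F)

lemma col_snoc_cons (x : Fin n → Fin 2) (F : Fin K' → (Fin n → Fin 2))
    (g : Fin n → Fin 2) (m : Fin n) :
    (fun j : Fin (K'+2) => (Fin.snoc (Fin.cons x F) g : Fin (K'+2) → (Fin n → Fin 2)) j m)
      = Fin.snoc (Fin.cons (x m) (fun j => F j m)) (g m) := by
  funext j
  refine Fin.lastCases ?_ (fun j' => ?_) j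
  · simp only [Fin.snoc_last]
  · simp only [Fin.snoc_castSucc]
    refine Fin.cases ?_ (fun j'' => ?_) j'
    · simp only [Fin.cons_zero]
    · simp only [Fin.cons_succ]

lemma col_cons (x : Fin n → Fin 2) (F : Fin K' → (Fin n → Fin 2)) (m : Fin n) :
    (fun j : Fin (K'+1) => (Fin.cons x F : Fin (K'+1) → (Fin n → Fin 2)) j m)
      = Fin.cons (x m) (fun j => F j m) := by
  funext j
  refine Fin.cases ?_ (fun j' => ?_) j
  · simp only [Fin.cons_zero]
  · simp only [Fin.cons_succ]

lemma Sl_cons (x : Fin n → Fin 2) (F : Fin K' → (Fin n → Fin 2)) (g : Fin n → Fin 2) :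
    WtensorPow (K'+2) n (Fin.snoc (Fin.cons x F) g)
      = (if ∀ m, x m = 0 ∨ g m = 0 then 1 else 0) * Qt K' n (orG x g) F := by
  unfold WtensorPow Qt
  rw [Finset.prod_congr rfl (fun m _ => by rw [col_snoc_cons x F g m])]
  have key : ∀ m : Fin n,
      Wtensor (K'+2) (Fin.snoc (Fin.cons (x m) (fun j => F j m)) (g m))
      = (if x m = 0 ∨ g m = 0 then (1:ℂ) else 0) *
        (if (orG x g) m = 1 then (if ∀ j, F j m = 0 then 1 else 0)
          else Wtensor K' (fun j => F j m)) := by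
    intro m
    rw [Wtensor_snoc (K'+1) _ (g m)]
    have hforall : (∀ j : Fin (K'+1), (Fin.cons (x m) (fun j => F j m) : Fin (K'+1) → Fin 2) j = 0)
        ↔ (x m = 0 ∧ ∀ j : Fin K', F j m = 0) := by
      rw [Fin.forall_fin_succ]
      simp only [Fin.cons_zero, Fin.cons_succ]
    rw [Wtensor_cons K' (x m) (fun j => F j m)]
    unfold orG
    rcases fin2cases (x m) with hx | hx <;> rcases fin2cases (g m) with hg | hg <;>
      rw [hx, hg] <;> simp [Fin.forall_fin_succ, Fin.exists_fin_succ]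
  rw [Finset.prod_congr rfl (fun m _ => key m), Finset.prod_mul_distrib, Finset.prod_boole]
  simp

lemma WPow_cons (x : Fin n → Fin 2) (F : Fin K' → (Fin n → Fin 2)) :
    WtensorPow (K'+1) n (Fin.cons x F) = Qt K' n x F := by
  unfold WtensorPow Qt
  refine Finset.prod_congr rfl fun m _ => ?_
  rw [col_cons x F m, Wtensor_cons K' (x m) (fun j => F j m)]

end L

section Span

variable {K' n : ℕ}

/-- weight of a bit string -/
def wtG (x : Fin n → Fin 2) : ℕ := ∑ m, (x m).val

lemma wtG_le (x : Fin n → Fin 2) : wtG x ≤ n := by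
  unfold wtG
  calc ∑ m, (x m).val ≤ ∑ m : Fin n, 1 := Finset.sum_le_sum (fun m _ => by omega)
  _ = n := by simp

lemma wtG_or (x g : Fin n → Fin 2) (hd : ∀ m, x m = 0 ∨ g m = 0) :
    wtG (orG x g) = wtG x + wtG g := by
  unfold wtG orG
  rw [← Finset.sum_add_distrib]
  refine Finset.sum_congr rfl fun m _ => ?_
  rcases hd m with h | h <;> rcases fin2cases (x m) with hx | hx <;>
    rcases fin2cases (g m) with hg | hg <;> rw [hx, hg] <;> simp_all <;> rfl

lemma wtG_pos {g : Fin n → Fin 2} (hg : g ≠ 0) : 1 ≤ wtG g := by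
  have : ∃ m, g m ≠ 0 := by
    by_contra hc
    push_neg at hc
    exact hg (funext fun m => hc m)
  obtain ⟨m, hm⟩ := this
  have h1 : 1 ≤ (g m).val := by
    rcases fin2cases (g m) with h | h
    · exact absurd h hm
    · simp [h]
  calc 1 ≤ (g m).val := h1
  _ ≤ wtG g := Finset.single_le_sum (f := fun m => (g m).val) (fun _ _ => Nat.zero_le _)
      (Finset.mem_univ m)

lemma Qt_eq_Lt_sub (c : (Fin n → Fin 2) → ℂ) (hc0 : c 0 = 1) (x : Fin n → Fin 2) :
    Qt K' n x = Lt K' n c x - ∑ g ∈ Finset.univ.filter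
      (fun g : Fin n → Fin 2 => g ≠ 0 ∧ ∀ m, x m = 0 ∨ g m = 0),
      c g • Qt K' n (orG x g) := by
  have hLt : Lt K' n c x = Qt K' n x + ∑ g ∈ Finset.univ.filter
      (fun g : Fin n → Fin 2 => g ≠ 0 ∧ ∀ m, x m = 0 ∨ g m = 0),
      c g • Qt K' n (orG x g) := by
    funext F
    simp only [Pi.add_apply, Finset.sum_apply, Pi.smul_apply, smul_eq_mul]
    unfold Lt
    rw [← Finset.sum_filter_add_sum_filter_not Finset.univ
      (fun g : Fin n → Fin 2 => ∀ m, x m = 0 ∨ g m = 0)]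
    have hnot : ∑ g ∈ Finset.univ.filter
        (fun g : Fin n → Fin 2 => ¬ ∀ m, x m = 0 ∨ g m = 0),
        c g * ((if ∀ m, x m = 0 ∨ g m = 0 then (1:ℂ) else 0) * Qt K' n (orG x g) F) = 0 := by
      refine Finset.sum_eq_zero fun g hg => ?_
      rw [Finset.mem_filter] at hg
      rw [if_neg hg.2, zero_mul, mul_zero]
    rw [hnot, add_zero]
    have hsplit : Finset.univ.filter (fun g : Fin n → Fin 2 => ∀ m, x m = 0 ∨ g m = 0)
        = insert 0 (Finset.univ.filter
          (fun g : Fin n → Fin 2 => g ≠ 0 ∧ ∀ m, x m = 0 ∨ g m = 0)) := by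
      ext g
      simp only [Finset.mem_filter, Finset.mem_insert, Finset.mem_univ, true_and]
      constructor
      · intro h
        by_cases hg : g = 0
        · exact Or.inl hg
        · exact Or.inr ⟨hg, h⟩
      · rintro (rfl | ⟨_, h⟩)
        · intro m; right; rfl
        · exact h
    rw [hsplit, Finset.sum_insert (by simp)]
    have h0 : c 0 * ((if ∀ m, x m = 0 ∨ (0 : Fin n → Fin 2) m = 0 then (1:ℂ) else 0)
        * Qt K' n (orG x 0) F) = Qt K' n x F := by
      have hor : orG x 0 = x := by
        funext m
        show max (x m) 0 = x m
        rcases fin2cases (x m) with h | h <;> rw [h] <;> rfl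
      rw [hor, hc0]
      simp
    rw [h0]
    refine congrArg (Qt K' n x F + ·) ?_
    refine Finset.sum_congr rfl fun g hg => ?_
    rw [Finset.mem_filter] at hg
    rw [if_pos hg.2.2, one_mul]
  rw [hLt, add_sub_cancel_right]

lemma Qt_mem_span (c : (Fin n → Fin 2) → ℂ) (hc0 : c 0 = 1) (x : Fin n → Fin 2) :
    Qt K' n x ∈ Submodule.span ℂ (Set.range (Lt K' n c)) := by
  have main : ∀ (N : ℕ) (x : Fin n → Fin 2), n ≤ wtG x + N →
      Qt K' n x ∈ Submodule.span ℂ (Set.range (Lt K' n c)) := by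
    intro N
    induction N with
    | zero =>
      intro x hx
      rw [Qt_eq_Lt_sub c hc0 x]
      have hempty : Finset.univ.filter
          (fun g : Fin n → Fin 2 => g ≠ 0 ∧ ∀ m, x m = 0 ∨ g m = 0) = ∅ := by
        ext g
        simp only [Finset.mem_filter, Finset.mem_univ, true_and, Finset.notMem_empty,
          iff_false, not_and]
        intro hg0 hd
        have h1 := wtG_or x g hd
        have h2 := wtG_le (orG x g)
        have h3 := wtG_pos hg0
        omega
      rw [hempty, Finset.sum_empty, sub_zero]
      exact Submodule.subset_span (Set.mem_range_self x)
    | succ N ih =>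
      intro x hx
      rw [Qt_eq_Lt_sub c hc0 x]
      refine Submodule.sub_mem _ (Submodule.subset_span (Set.mem_range_self x))
        (Submodule.sum_mem _ fun g hg => ?_)
      rw [Finset.mem_filter] at hg
      refine Submodule.smul_mem _ _ (ih (orG x g) ?_)
      have h1 := wtG_or x g hg.2.2
      have h3 := wtG_pos hg.2.1
      omega
  exact main n x (by omega)

/-- The key triangularity lemma: the rank of `W_{K'+1}^{⊗n}` is at most the rank of
any slice-combination with coefficient 1 on the zero slice. -/
lemma lemmaL (K' n : ℕ) (c : (Fin n → Fin 2) → ℂ) (hc0 : c 0 = 1) :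
    krank (WtensorPow (K'+1) n) ≤ krank (fun f : Fin (K'+1) → (Fin n → Fin 2) =>
      ∑ g : Fin n → Fin 2, c g * WtensorPow (K'+2) n (Fin.snoc f g)) := by
  classical
  -- coefficients expressing Qt in terms of Lt
  have hcoeff : ∀ x : Fin n → Fin 2, ∃ A : (Fin n → Fin 2) → ℂ,
      ∀ F, ∑ y : Fin n → Fin 2, A y * Lt K' n c y F = Qt K' n x F := by
    intro x
    obtain ⟨A, hA⟩ := (Submodule.mem_span_range_iff_exists_fun ℂ).mp (Qt_mem_span c hc0 x)
    refine ⟨A, fun F => ?_⟩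
    have := congrFun hA F
    simpa [Finset.sum_apply, Pi.smul_apply, smul_eq_mul] using this
  choose A hA using hcoeff
  -- take an optimal decomposition of the combined tensor
  set S : (Fin (K'+1) → (Fin n → Fin 2)) → ℂ := fun f =>
    ∑ g : Fin n → Fin 2, c g * WtensorPow (K'+2) n (Fin.snoc f g) with hS
  obtain ⟨v, hv⟩ := krank_spec S
  -- build a decomposition of WtensorPow (K'+1) n
  refine krank_le _ (fun m j => if hj : j = 0 then
      (fun x : Fin n → Fin 2 => ∑ y : Fin n → Fin 2, A x y * v m 0 y) else v m j) ?_
  intro f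
  have hsplit : ∀ m : Fin (krank S),
      (∏ j : Fin (K'+1), (if hj : j = 0 then
        (fun x : Fin n → Fin 2 => ∑ y, A x y * v m 0 y) else v m j) (f j))
      = (∑ y, A (f 0) y * v m 0 y) * ∏ j : Fin K', v m j.succ (f j.succ) := by
    intro m
    rw [Fin.prod_univ_succ]
    rw [dif_pos rfl]
    refine congrArg _ (Finset.prod_congr rfl fun j _ => ?_)
    rw [dif_neg (Fin.succ_ne_zero j)]
  rw [Finset.sum_congr rfl fun m _ => hsplit m]
  refine Eq.symm ?_
  have hScons : ∀ y : Fin n → Fin 2,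
      S (Fin.cons y (Fin.tail f)) = Lt K' n c y (Fin.tail f) := by
    intro y
    rw [hS]
    unfold Lt
    exact Finset.sum_congr rfl fun g _ => by rw [Sl_cons]
  have hSdec : ∀ y : Fin n → Fin 2,
      ∑ m, v m 0 y * ∏ j : Fin K', v m j.succ (f j.succ) = S (Fin.cons y (Fin.tail f)) := by
    intro y
    rw [hv (Fin.cons y (Fin.tail f))]
    refine Finset.sum_congr rfl fun m _ => ?_
    rw [Fin.prod_univ_succ, Fin.cons_zero]
    refine congrArg _ (Finset.prod_congr rfl fun j _ => ?_)
    rw [Fin.cons_succ]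
    rfl
  calc ∑ m, (∑ y, A (f 0) y * v m 0 y) * ∏ j : Fin K', v m j.succ (f j.succ)
      = ∑ m, ∑ y, A (f 0) y * (v m 0 y * ∏ j : Fin K', v m j.succ (f j.succ)) := by
        refine Finset.sum_congr rfl fun m _ => ?_
        rw [Finset.sum_mul]
        exact Finset.sum_congr rfl fun y _ => by ring
    _ = ∑ y, ∑ m, A (f 0) y * (v m 0 y * ∏ j : Fin K', v m j.succ (f j.succ)) :=
        Finset.sum_comm
    _ = ∑ y, A (f 0) y * S (Fin.cons y (Fin.tail f)) := by
        refine Finset.sum_congr rfl fun y _ => ?_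
        rw [← Finset.mul_sum, hSdec y]
    _ = ∑ y, A (f 0) y * Lt K' n c y (Fin.tail f) := by
        exact Finset.sum_congr rfl fun y _ => by rw [hScons y]
    _ = Qt K' n (f 0) (Fin.tail f) := hA (f 0) (Fin.tail f)
    _ = WtensorPow (K'+1) n (Fin.cons (f 0) (Fin.tail f)) := (WPow_cons _ _).symm
    _ = WtensorPow (K'+1) n f := by rw [Fin.cons_self_tail]

lemma col_snoc {K n : ℕ} (f : Fin K → (Fin n → Fin 2)) (g : Fin n → Fin 2) (m : Fin n) :
    (fun j : Fin (K+1) => (Fin.snoc f g : Fin (K+1) → (Fin n → Fin 2)) j m)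
      = Fin.snoc (fun j => f j m) (g m) := by
  funext j
  refine Fin.lastCases ?_ (fun j' => ?_) j
  · simp only [Fin.snoc_last]
  · simp only [Fin.snoc_castSucc]

/-- the evaluation points -/
def ptsf (K' n : ℕ) (h : Fin n → Fin 2) : Fin (K'+1) → (Fin n → Fin 2) :=
  fun j m => if h m = 1 then 0 else (if j = 0 then 1 else 0)

lemma slice_eval (K' n : ℕ) (g h : Fin n → Fin 2) :
    WtensorPow (K'+2) n (Fin.snoc (ptsf K' n h) g) = if g = h then 1 else 0 := by
  unfold WtensorPow
  have key : ∀ m : Fin n, Wtensor (K'+2)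
      (fun j => (Fin.snoc (ptsf K' n h) g : Fin (K'+2) → (Fin n → Fin 2)) j m)
      = if g m = h m then 1 else 0 := by
    intro m
    rw [col_snoc (ptsf K' n h) g m, Wtensor_snoc (K'+1) _ (g m)]
    rcases fin2cases (h m) with hh | hh <;> rcases fin2cases (g m) with hg | hg <;>
      simp [ptsf, hh, hg, Wtensor_zero K', Wtensor_delta K']
  rw [Finset.prod_congr rfl fun m _ => key m]
  by_cases hgh : g = h
  · rw [if_pos hgh, Finset.prod_eq_one fun m _ => by rw [if_pos (congrFun hgh m)]]
  · have : ∃ m, g m ≠ h m := by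
      by_contra hc; push_neg at hc; exact hgh (funext hc)
    obtain ⟨m, hm⟩ := this
    rw [if_neg hgh]
    exact Finset.prod_eq_zero (Finset.mem_univ m) (if_neg hm)

lemma equiv_zero (n d : ℕ) (hd : 2^n = d + 1) :
    ((finFunctionFinEquiv.trans (finCongr hd)) (0 : Fin n → Fin 2) : Fin (d+1)) = 0 := by
  apply Fin.ext
  simp [finCongr_apply, finFunctionFinEquiv_apply]


/-- The substitution lemma. -/
lemma subst_lemma {K : ℕ} {α : Type*} [Fintype α] [DecidableEq α] :
    ∀ (d r : ℕ) (M : Fin (d+1) → (Fin (K+1) → α) → ℂ)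
      (a : Fin r → Fin (K+1) → α → ℂ) (w : Fin r → Fin (d+1) → ℂ),
      (∀ g f, M g f = ∑ m, (∏ j, a m j (f j)) * w m g) →
      (∃ pts : Fin (d+1) → Fin (K+1) → α, ∀ g h, M g (pts h) = if g = h then 1 else 0) →
      ∃ c : Fin (d+1) → ℂ, c 0 = 1 ∧ krank (fun f => ∑ g, c g * M g f) + d ≤ r := by
  intro d
  induction d with
  | zero =>
    intro r M a w hdec _
    refine ⟨fun _ => 1, rfl, ?_⟩
    simp only [Nat.add_zero]
    have : (fun f => ∑ g : Fin 1, (1:ℂ) * M g f) = M 0 := by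
      funext f; simp
    rw [this]
    refine krank_le _ (fun m j x => if j = 0 then a m j x * w m 0 else a m j x) ?_
    intro f
    rw [hdec 0 f]
    refine Finset.sum_congr rfl fun m _ => ?_
    rw [Fin.prod_univ_succ, Fin.prod_univ_succ]
    simp only [if_pos rfl]
    have : ∀ j : Fin K, (if (j.succ : Fin (K+1)) = 0 then a m j.succ (f j.succ) * w m 0
        else a m j.succ (f j.succ)) = a m j.succ (f j.succ) := by
      intro j; rw [if_neg (Fin.succ_ne_zero j)]
    rw [Finset.prod_congr rfl fun j _ => this j]
    simp only [if_true, eq_self_iff_true]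
    ring
  | succ d ih =>
    intro r M a w hdec ⟨pts, hpts⟩
    -- r must be positive
    rcases r with _ | r'
    · exfalso
      have h1 := hpts (Fin.last (d+1)) (Fin.last (d+1))
      rw [hdec] at h1
      simp at h1
    -- find m₀ with w m₀ last ≠ 0
    have hex : ∃ m₀ : Fin (r'+1), w m₀ (Fin.last (d+1)) ≠ 0 := by
      by_contra hc
      push_neg at hc
      have h1 := hpts (Fin.last (d+1)) (Fin.last (d+1))
      rw [hdec] at h1
      simp only [if_pos rfl] at h1
      rw [Finset.sum_eq_zero (fun m _ => by rw [hc m, mul_zero])] at h1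
      exact one_ne_zero h1.symm
    obtain ⟨m₀, hm₀⟩ := hex
    set σ := Equiv.swap m₀ (Fin.last r') with hσ
    set a2 : Fin (r'+1) → Fin (K+1) → α → ℂ := fun m => a (σ m) with ha2
    set w2 : Fin (r'+1) → Fin (d+2) → ℂ := fun m => w (σ m) with hw2
    have hdec2 : ∀ g f, M g f = ∑ m, (∏ j, a2 m j (f j)) * w2 m g := by
      intro g f
      rw [hdec g f, ← Equiv.sum_comp σ (fun m => (∏ j, a m j (f j)) * w m g)]
    have hwlast : w2 (Fin.last r') (Fin.last (d+1)) ≠ 0 := by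
      simpa [hw2, hσ, Equiv.swap_apply_right] using hm₀
    set lam : Fin (d+1) → ℂ :=
      fun g => w2 (Fin.last r') g.castSucc / w2 (Fin.last r') (Fin.last (d+1)) with hlam
    set M' : Fin (d+1) → (Fin (K+1) → α) → ℂ :=
      fun g f => M g.castSucc f - lam g * M (Fin.last (d+1)) f with hM'
    set a' : Fin r' → Fin (K+1) → α → ℂ := fun m => a2 m.castSucc with ha'
    set w' : Fin r' → Fin (d+1) → ℂ :=
      fun m g => w2 m.castSucc g.castSucc - lam g * w2 m.castSucc (Fin.last (d+1)) with hw'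
    have hdec' : ∀ g f, M' g f = ∑ m, (∏ j, a' m j (f j)) * w' m g := by
      intro g f
      have expand : M' g f = ∑ m : Fin (r'+1), (∏ j, a2 m j (f j)) *
          (w2 m g.castSucc - lam g * w2 m (Fin.last (d+1))) := by
        rw [hM']
        simp only []
        rw [hdec2 g.castSucc f, hdec2 (Fin.last (d+1)) f, Finset.mul_sum,
          ← Finset.sum_sub_distrib]
        refine Finset.sum_congr rfl fun m _ => ?_
        ring
      rw [expand, Fin.sum_univ_castSucc]
      have hlastterm : (∏ j, a2 (Fin.last r') j (f j)) *
          (w2 (Fin.last r') g.castSucc - lam g * w2 (Fin.last r') (Fin.last (d+1))) = 0 := by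
        rw [hlam]
        simp only []
        rw [div_mul_cancel₀ _ hwlast, sub_self, mul_zero]
      rw [hlastterm, add_zero]
    have hpts' : ∃ pts' : Fin (d+1) → Fin (K+1) → α,
        ∀ g h, M' g (pts' h) = if g = h then 1 else 0 := by
      refine ⟨fun h => pts h.castSucc, fun g h => ?_⟩
      rw [hM']
      simp only []
      rw [hpts, hpts]
      rw [if_neg (by simp [Fin.ext_iff, Fin.lt_iff_val_lt_val]; omega : (Fin.last (d+1)) ≠ h.castSucc)]
      rw [mul_zero, sub_zero]
      by_cases hgh : g = h
      · subst hgh; simp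
      · rw [if_neg (fun hc => hgh (Fin.castSucc_injective _ hc)), if_neg hgh]
    obtain ⟨c', hc'0, hc'rank⟩ := ih r' M' a' w' hdec' hpts'
    refine ⟨Fin.snoc c' (- ∑ g, c' g * lam g), ?_, ?_⟩
    · have : (0 : Fin (d+2)) = Fin.castSucc 0 := rfl
      rw [this, Fin.snoc_castSucc]
      exact hc'0
    · have heq : (fun f => ∑ g : Fin (d+2), (Fin.snoc c' (- ∑ g, c' g * lam g) : Fin (d+2) → ℂ) g * M g f)
          = (fun f => ∑ g : Fin (d+1), c' g * M' g f) := by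
        funext f
        rw [Fin.sum_univ_castSucc]
        simp only [Fin.snoc_castSucc, Fin.snoc_last, hM']
        rw [neg_mul, Finset.sum_mul, ← sub_eq_add_neg, ← Finset.sum_sub_distrib]
        exact Finset.sum_congr rfl fun g _ => by ring
      rw [heq]
      omega

lemma step_ineq (K' n : ℕ) :
    krank (WtensorPow (K'+1) n) + (2^n - 1) ≤ krank (WtensorPow (K'+2) n) := by
  classical
  obtain ⟨d, hd⟩ : ∃ d, 2^n = d + 1 :=
    ⟨2^n - 1, by have : 1 ≤ 2^n := Nat.one_le_two_pow; omega⟩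
  set e : (Fin n → Fin 2) ≃ Fin (d+1) := finFunctionFinEquiv.trans (finCongr hd) with he
  obtain ⟨v, hv⟩ := krank_spec (WtensorPow (K'+2) n)
  set M : Fin (d+1) → (Fin (K'+1) → (Fin n → Fin 2)) → ℂ :=
    fun i f => WtensorPow (K'+2) n (Fin.snoc f (e.symm i)) with hM
  have hdec : ∀ i f, M i f = ∑ m, (∏ j, v m j.castSucc (f j))
      * v m (Fin.last (K'+1)) (e.symm i) := by
    intro i f
    rw [hM]
    simp only []
    rw [hv]
    refine Finset.sum_congr rfl fun m _ => ?_
    rw [Fin.prod_univ_castSucc, Fin.snoc_last]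
    refine congrArg (· * _) (Finset.prod_congr rfl fun j _ => ?_)
    rw [Fin.snoc_castSucc]
  have hpts : ∃ pts : Fin (d+1) → Fin (K'+1) → (Fin n → Fin 2),
      ∀ g h, M g (pts h) = if g = h then 1 else 0 := by
    refine ⟨fun i => ptsf K' n (e.symm i), fun g h => ?_⟩
    rw [hM]
    simp only []
    rw [slice_eval]
    by_cases hgh : g = h
    · rw [if_pos hgh, if_pos (by rw [hgh])]
    · rw [if_neg (fun hc => hgh (e.symm.injective hc)), if_neg hgh]
  obtain ⟨c, hc0, hcr⟩ := subst_lemma d (krank (WtensorPow (K'+2) n)) M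
    (fun m j => v m j.castSucc) (fun m i => v m (Fin.last (K'+1)) (e.symm i)) hdec hpts
  have hcomb : (fun f => ∑ i : Fin (d+1), c i * M i f)
      = fun f : Fin (K'+1) → (Fin n → Fin 2) =>
        ∑ g : Fin n → Fin 2, (c ∘ e) g * WtensorPow (K'+2) n (Fin.snoc f g) := by
    funext f
    rw [← Equiv.sum_comp e (fun i => c i * M i f)]
    refine Finset.sum_congr rfl fun g _ => ?_
    rw [hM]
    simp only [Function.comp_apply, Equiv.symm_apply_apply]
  rw [hcomb] at hcr
  have hce0 : (c ∘ e) 0 = 1 := by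
    rw [Function.comp_apply, he, equiv_zero n d hd]
    exact hc0
  have hL := lemmaL K' n (c ∘ e) hce0
  have hd2 : 2^n - 1 = d := by omega
  rw [hd2]
  exact le_trans (Nat.add_le_add_right hL d) hcr


/-- For `k ≥ 3` and `n ≥ 1`:
`rank(W_k^{⊗n}) ≥ rank(W₃^{⊗n}) + (k−3)(2^n − 1)`. -/
theorem stmt19 (k n : ℕ) (hk : 3 ≤ k) (hn : 1 ≤ n) :
    krank (WtensorPow 3 n) + (k - 3) * (2 ^ n - 1) ≤ krank (WtensorPow k n) := by
  induction k, hk using Nat.le_induction with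
  | base => simp
  | succ k hk ih =>
    have hstep := step_ineq (k-1) n
    rw [show k - 1 + 1 = k from by omega, show k - 1 + 2 = k + 1 from by omega] at hstep
    have harith : k + 1 - 3 = (k - 3) + 1 := by omega
    calc krank (WtensorPow 3 n) + (k + 1 - 3) * (2 ^ n - 1)
        = krank (WtensorPow 3 n) + (k - 3) * (2 ^ n - 1) + (2 ^ n - 1) := by
          rw [harith, Nat.succ_mul, Nat.add_assoc]
      _ ≤ krank (WtensorPow k n) + (2 ^ n - 1) := Nat.add_le_add_right ih _
      _ ≤ krank (WtensorPow (k + 1) n) := hstep
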